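/- arXiv:1502.02759 — 2 statements merged into one kernel-verified Lean document; each statement's English description precedes it below -/
import Mathlib

section
/- Let ρ1, ρ2, α1', α2' and a1 be real numbers with a1 ≠ 0, α1' ≠ ±α2', σ1 = 1, σ2 = -1, and suppose a2 > 0 satisfies a2² = -(σ1ρ1²α2'²(a1² + α2'²) + σ2ρ2²α1'²(a1² + α1'²)) / (σ1ρ1²(a1² + α2'²) + σ2ρ2²(a1² + α1'²)), with all displayed denominators and the quantities a_j² + α_k'² nonzero. Then σ1ρ1²/(a1² + α1'²) + σ2ρ2²/(a1² + α2'²) = σ1ρ1²/(a2² + α1'²) + σ2ρ2²/(a2² + α2'²), i.e., the two solitons have equal velocities. -/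
theorem stmt_10 (ρ1 ρ2 α1' α2' a1 a2 σ1 σ2 : ℝ)
    (ha1 : a1 ≠ 0) (hα : α1' ≠ α2' ∧ α1' ≠ -α2')
    (hσ1 : σ1 = 1) (hσ2 : σ2 = -1) (ha2pos : 0 < a2)
    (ha2 : a2^2 = -(σ1 * ρ1^2 * α2'^2 * (a1^2 + α2'^2) + σ2 * ρ2^2 * α1'^2 * (a1^2 + α1'^2))
        / (σ1 * ρ1^2 * (a1^2 + α2'^2) + σ2 * ρ2^2 * (a1^2 + α1'^2)))
    (hden : σ1 * ρ1^2 * (a1^2 + α2'^2) + σ2 * ρ2^2 * (a1^2 + α1'^2) ≠ 0)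
    (h11 : a1^2 + α1'^2 ≠ 0) (h12 : a1^2 + α2'^2 ≠ 0)
    (h21 : a2^2 + α1'^2 ≠ 0) (h22 : a2^2 + α2'^2 ≠ 0) :
    σ1 * ρ1^2 / (a1^2 + α1'^2) + σ2 * ρ2^2 / (a1^2 + α2'^2) =
      σ1 * ρ1^2 / (a2^2 + α1'^2) + σ2 * ρ2^2 / (a2^2 + α2'^2) := by
  have key : a2^2 * (σ1 * ρ1^2 * (a1^2 + α2'^2) + σ2 * ρ2^2 * (a1^2 + α1'^2)) +
      (σ1 * ρ1^2 * α2'^2 * (a1^2 + α2'^2) + σ2 * ρ2^2 * α1'^2 * (a1^2 + α1'^2)) = 0 := by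
    rw [ha2]; field_simp; ring
  field_simp
  linear_combination (a2^2 - a1^2) * key
end

section
/- Let N ≥ 1, and for 1 ≤ i, j ≤ N and integers k, l define m_{ij}(k,l) = δ_{ij} + (-(p_i - iα1)/(p_j* + iα1))^k · (-(p_i - iα2)/(p_j* + iα2))^l · (1/(p_i + p_j*)) · e^{ξ_i + ξ_j*}, where α1, α2 are real, p_1,…,p_N are complex numbers with p_i + p_j* ≠ 0 and p_i ≠ iα1, iα2, p_i* ≠ -iα1, -iα2, and ξ_1,…,ξ_N are complex numbers. Let τ(k,l) = det(m_{ij}(k,l)). Then τ(k,l)* = τ(-k,-l); in particular τ(0,0) is real. -/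
open Complex

theorem stmt_13 (N : ℕ) (hN : 1 ≤ N) (α1 α2 : ℝ) (p ξ : Fin N → ℂ)
    (hden : ∀ i j, p i + (starRingEnd ℂ) (p j) ≠ 0)
    (h1 : ∀ i, p i ≠ I * α1) (h2 : ∀ i, p i ≠ I * α2)
    (h1' : ∀ i, (starRingEnd ℂ) (p i) ≠ -I * α1)
    (h2' : ∀ i, (starRingEnd ℂ) (p i) ≠ -I * α2)
    (τ : ℤ → ℤ → ℂ)
    (hτ : ∀ k l : ℤ, τ k l = Matrix.det (Matrix.of fun i j : Fin N =>
      (if i = j then (1 : ℂ) else 0)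
      + (-(p i - I * α1) / ((starRingEnd ℂ) (p j) + I * α1)) ^ k
        * (-(p i - I * α2) / ((starRingEnd ℂ) (p j) + I * α2)) ^ l
        * (1 / (p i + (starRingEnd ℂ) (p j)))
        * Complex.exp (ξ i + (starRingEnd ℂ) (ξ j)))) :
    (∀ k l : ℤ, (starRingEnd ℂ) (τ k l) = τ (-k) (-l)) ∧ (τ 0 0).im = 0 := by
  have key : ∀ k l : ℤ, (starRingEnd ℂ) (τ k l) = τ (-k) (-l) := by
    intro k l
    rw [hτ k l, hτ (-k) (-l), RingHom.map_det]
    rw [← Matrix.det_transpose (Matrix.of fun i j : Fin N =>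
      (if i = j then (1 : ℂ) else 0)
      + (-(p i - I * α1) / ((starRingEnd ℂ) (p j) + I * α1)) ^ (-k)
        * (-(p i - I * α2) / ((starRingEnd ℂ) (p j) + I * α2)) ^ (-l)
        * (1 / (p i + (starRingEnd ℂ) (p j)))
        * Complex.exp (ξ i + (starRingEnd ℂ) (ξ j)))]
    congr 1
    ext i j
    have hswap : ∀ (a b : ℂ) (m : ℤ), (-a / b) ^ (-m) = (-b / a) ^ m := by
      intro a b m
      rw [zpow_neg, ← inv_zpow, inv_div]
      congr 1
      ring
    simp only [RingHom.mapMatrix_apply, Matrix.map_apply, Matrix.transpose_apply, Matrix.of_apply,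
      map_add, map_mul, map_zpow₀, map_div₀, map_neg, map_sub, map_one, map_zero, apply_ite,
      Complex.conj_I, Complex.conj_ofReal, ← Complex.exp_conj, Complex.conj_conj]
    rw [hswap, hswap]
    have hite : (if i = j then (1:ℂ) else 0) = (if j = i then 1 else 0) := by
      simp [eq_comm]
    rw [hite, add_comm (ξ j) _, add_comm (p j) _]
    ring_nf
  refine ⟨key, ?_⟩
  have h := key 0 0
  simp only [neg_zero] at h
  exact Complex.conj_eq_iff_im.mp h
end
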